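/- Let $K\ge 2$, $L\ge 2$, let $w,v$ be probability vectors on $[K]$, let $Q,R$ be $K\times K$ stochastic matrices, and let $F_1,\dots,F_K$, $G_1,\dots,G_K$ be probability distributions on a measurable space $(\mathscr{Y},\mathcal{Y})$. Define $P_{w,Q,F} = \sum_{k_1,\dots,k_L\in[K]} w_{k_1} Q_{k_1,k_2}\cdots Q_{k_{L-1},k_L} \bigotimes_{l=1}^L F_{k_l}$, and similarly $P_{v,R,G}$. Then $h^2(P_{w,Q,F}, P_{v,R,G}) \le h^2(w,v) + (L-1)\max_{k\in[K]} h^2(Q_{k\cdot}, R_{k\cdot}) + L\max_{k\in[K]} h^2(F_k,G_k)$, where $h^2(w,v)$ and $h^2(Q_{k\cdot},R_{k\cdot})$ are squared Hellinger distances of probability vectors. -/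

import Mathlib

open MeasureTheory
open scoped ENNReal NNReal

/-- The squared Hellinger distance between two measures, defined via densities with respect to the
dominating measure `P + Q`: `h²(P,Q) = (1/2) ∫ (√(dP/dμ) - √(dQ/dμ))² dμ` with `μ = P + Q`. -/
noncomputable def sqHellinger {α : Type*} [MeasurableSpace α] (P Q : Measure α) : ℝ :=
  (1 / 2) * ∫ x, (Real.sqrt ((P.rnDeriv (P + Q)) x).toReal
    - Real.sqrt ((Q.rnDeriv (P + Q)) x).toReal) ^ 2 ∂(P + Q)

/-- The squared Hellinger distance between two finitely supported vectors (e.g. probability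
vectors): `h²(a,b) = (1/2) ∑ (√aₖ - √bₖ)²`. -/
noncomputable def sqHellingerVec {ι : Type*} [Fintype ι] (a b : ι → ℝ) : ℝ :=
  (1 / 2) * ∑ k, (Real.sqrt (a k) - Real.sqrt (b k)) ^ 2

/-- The law `P_{w,Q,F}` of `L = n+1` consecutive observations of a hidden Markov model with
initial distribution `w`, transition matrix `Q` and emission distributions `F`:
`∑_{k₁,…,k_L} w_{k₁} Q_{k₁k₂} ⋯ Q_{k_{L-1}k_L} ⨂_{l} F_{k_l}`. -/
noncomputable def hmmMix {Y : Type*} [MeasurableSpace Y] (K n : ℕ)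
    (w : Fin K → ℝ) (Q : Fin K → Fin K → ℝ) (F : Fin K → Measure Y) :
    Measure (Fin (n + 1) → Y) :=
  ∑ k : Fin (n + 1) → Fin K,
    (ENNReal.ofReal (w (k 0) * ∏ l : Fin n, Q (k l.castSucc) (k l.succ))) •
      Measure.pi (fun l => F (k l))

/-! Write `1 - h²` as the Hellinger affinity `∫ √(p q)`. Over a common dominating measure `μ`,
each hidden-Markov law has the density `∑ₖ cₖ ∏ₗ p_{kₗ}(xₗ)` with respect to `μ^L`: a mixture
over hidden paths `k` with path weights `cₖ = w_{k₁} Q_{k₁k₂} ⋯ Q_{k_{L-1}k_L}`. Pointwise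
Cauchy–Schwarz over the paths bounds the affinity of the two laws below by
`∑ₖ √(cₖ dₖ) ∏ₗ ρ(kₗ)`, where `ρ(k) ≥ 1 - ε_F` is the affinity of `F_k` and `G_k`. Summing
`√(cₖ dₖ)` one transition at a time, every row affinity being at least `1 - ε_Q`, gives at least
`(1 - h²(w, v)) (1 - ε_Q)^(L-1)`; here `ε_Q`, `ε_F` are the two maxima in the bound. Bernoulli's
inequality turns this lower bound on the affinity into the claimed upper bound on `h²`. -/

section PathWeight

variable {ι : Type*}

def pathWeight {m : ℕ} (s : ι → ℝ) (t : ι → ι → ℝ) (k : Fin (m + 1) → ι) : ℝ :=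
  s (k 0) * ∏ l : Fin m, t (k l.castSucc) (k l.succ)

lemma pathWeight_nonneg {m : ℕ} {s : ι → ℝ} {t : ι → ι → ℝ} (hs : ∀ i, 0 ≤ s i)
    (ht : ∀ i j, 0 ≤ t i j) (k : Fin (m + 1) → ι) : 0 ≤ pathWeight s t k :=
  mul_nonneg (hs _) (Finset.prod_nonneg fun _ _ => ht _ _)

lemma sum_pathWeight_zero [Fintype ι] (s : ι → ℝ) (t : ι → ι → ℝ) :
    ∑ k : Fin 1 → ι, pathWeight s t k = ∑ i, s i := by
  simp [pathWeight, ← (Equiv.funUnique (Fin 1) ι).symm.sum_comp]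

lemma sum_pathWeight_succ [Fintype ι] (m : ℕ) (s : ι → ℝ) (t : ι → ι → ℝ) :
    ∑ k : Fin (m + 2) → ι, pathWeight s t k
      = ∑ i, s i * ∑ k : Fin (m + 1) → ι, pathWeight (t i) t k := by
  rw [← (Fin.consEquiv fun _ => ι).sum_comp, Fintype.sum_prod_type]
  simp [pathWeight, Fin.prod_univ_succ, Finset.mul_sum]

lemma sum_pathWeight_of_sum_eq_one [Fintype ι] (m : ℕ) (s : ι → ℝ) {t : ι → ι → ℝ}
    (ht : ∀ i, ∑ j, t i j = 1) : ∑ k : Fin (m + 1) → ι, pathWeight s t k = ∑ i, s i := by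
  induction m generalizing s with
  | zero => exact sum_pathWeight_zero s t
  | succ m ih => simp [sum_pathWeight_succ, ih, ht]

lemma sum_mul_pow_le_sum_pathWeight [Fintype ι] (m : ℕ) {s : ι → ℝ} {t : ι → ι → ℝ} {r : ℝ}
    (hs : ∀ i, 0 ≤ s i) (ht : ∀ i j, 0 ≤ t i j) (hr : 0 ≤ r) (hrow : ∀ i, r ≤ ∑ j, t i j) :
    (∑ i, s i) * r ^ m ≤ ∑ k : Fin (m + 1) → ι, pathWeight s t k := by
  induction m generalizing s with
  | zero => simp [sum_pathWeight_zero]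
  | succ m ih =>
    rw [sum_pathWeight_succ, Finset.sum_mul]
    refine Finset.sum_le_sum fun i _ => ?_
    calc s i * r ^ (m + 1) = s i * (r * r ^ m) := by ring
      _ ≤ s i * ((∑ j, t i j) * r ^ m) := by gcongr ?_ * (?_ * _); exacts [hs i, hrow i]
      _ ≤ s i * ∑ k : Fin (m + 1) → ι, pathWeight (t i) t k := by
        gcongr ?_ * ?_; exacts [hs i, ih (ht i)]

lemma sqrt_pathWeight_mul_pathWeight {m : ℕ} {s s' : ι → ℝ} {t t' : ι → ι → ℝ}
    (hs : ∀ i, 0 ≤ s i) (hs' : ∀ i, 0 ≤ s' i) (ht : ∀ i j, 0 ≤ t i j)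
    (ht' : ∀ i j, 0 ≤ t' i j) (k : Fin (m + 1) → ι) :
    √(pathWeight s t k * pathWeight s' t' k)
      = pathWeight (fun i => √(s i * s' i)) (fun i j => √(t i j * t' i j)) k := by
  rw [pathWeight, pathWeight, mul_mul_mul_comm, ← Finset.prod_mul_distrib,
    Real.sqrt_mul (mul_nonneg (hs _) (hs' _)),
    Real.sqrt_prod _ fun _ _ => mul_nonneg (ht _ _) (ht' _ _), pathWeight]

end PathWeight

lemma sqHellingerVec_eq_one_sub {ι : Type*} [Fintype ι] {a b : ι → ℝ} (ha : ∀ i, 0 ≤ a i)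
    (hb : ∀ i, 0 ≤ b i) (ha1 : ∑ i, a i = 1) (hb1 : ∑ i, b i = 1) :
    sqHellingerVec a b = 1 - ∑ i, √(a i * b i) := by
  have h (i : ι) : (√(a i) - √(b i)) ^ 2 = a i + b i - 2 * √(a i * b i) := by
    rw [sub_sq, Real.sq_sqrt (ha i), Real.sq_sqrt (hb i), Real.sqrt_mul (ha i)]
    ring
  simp only [sqHellingerVec, h, Finset.sum_sub_distrib, Finset.sum_add_distrib, ha1, hb1,
    ← Finset.mul_sum]
  ring

lemma sqHellingerVec_le_one {ι : Type*} [Fintype ι] {a b : ι → ℝ} (ha : ∀ i, 0 ≤ a i)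
    (hb : ∀ i, 0 ≤ b i) (ha1 : ∑ i, a i = 1) (hb1 : ∑ i, b i = 1) : sqHellingerVec a b ≤ 1 := by
  rw [sqHellingerVec_eq_one_sub ha hb ha1 hb1]
  exact sub_le_self _ (Finset.sum_nonneg fun _ _ => Real.sqrt_nonneg _)

lemma sqHellingerVec_nonneg {ι : Type*} [Fintype ι] (a b : ι → ℝ) : 0 ≤ sqHellingerVec a b :=
  mul_nonneg (by norm_num) (Finset.sum_nonneg fun _ _ => sq_nonneg _)

lemma one_sub_mul_pow_mul_pow_le {x y z : ℝ} (hx : 0 ≤ x) (hy : 0 ≤ y) (hy1 : y ≤ 1)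
    (hz : 0 ≤ z) (hz1 : z ≤ 1) (m p : ℕ) :
    1 - (1 - x) * (1 - y) ^ m * (1 - z) ^ p ≤ x + m * y + p * z := by
  have bernoulli (u : ℝ) (hu1 : u ≤ 1) (k : ℕ) : 1 - k * u ≤ (1 - u) ^ k := by
    simpa [sub_eq_add_neg] using one_add_mul_le_pow (a := -u) (by linarith) k
  have hY := bernoulli y hy1 m
  have hZ := bernoulli z hz1 p
  have hY0 : 0 ≤ (1 - y) ^ m := pow_nonneg (by linarith) m
  have hY1 : (1 - y) ^ m ≤ 1 := pow_le_one₀ (by linarith) (by linarith)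
  have hZ0 : 0 ≤ (1 - z) ^ p := pow_nonneg (by linarith) p
  have hZ1 : (1 - z) ^ p ≤ 1 := pow_le_one₀ (by linarith) (by linarith)
  nlinarith [mul_nonneg (sub_nonneg.2 hY1) (sub_nonneg.2 hZ1),
    mul_nonneg hx (mul_nonneg hY0 hZ0), mul_le_one₀ hY1 hZ0 hZ1]

theorem lintegral_fin_nat_prod_eq_prod {E : Type*} [MeasurableSpace E] {n : ℕ}
    {μ : Fin n → Measure E} [∀ i, SigmaFinite (μ i)] {f : Fin n → E → ℝ≥0∞}
    (hf : ∀ i, Measurable (f i)) :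
    ∫⁻ x : Fin n → E, ∏ i, f i (x i) ∂(Measure.pi μ) = ∏ i, ∫⁻ x, f i x ∂(μ i) := by
  induction n with
  | zero => simp
  | succ n ih =>
      calc
        _ = ∫⁻ x : E × (Fin n → E), f 0 x.1 * ∏ i : Fin n, f i.succ (x.2 i)
            ∂((μ 0).prod (Measure.pi fun i ↦ μ i.succ)) := by
          rw [← ((measurePreserving_piFinSuccAbove μ 0).symm).lintegral_comp_emb
            (MeasurableEquiv.measurableEmbedding _)]
          simp_rw [MeasurableEquiv.piFinSuccAbove_symm_apply, Fin.insertNthEquiv,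
            Fin.prod_univ_succ, Fin.insertNth_zero, Equiv.coe_fn_mk, Fin.cons_succ,
            Fin.zero_succAbove, cast_eq, Fin.cons_zero]
        _ = (∫⁻ x, f 0 x ∂μ 0) * ∏ i : Fin n, ∫⁻ x, f i.succ x ∂(μ i.succ) := by
          have hg : Measurable fun y : Fin n → E => ∏ i : Fin n, f i.succ (y i) :=
            Finset.measurable_prod _ fun i _ => (hf i.succ).comp (measurable_pi_apply i)
          rw [lintegral_prod_mul (hf 0).aemeasurable hg.aemeasurable, ih fun i => hf i.succ]
        _ = ∏ i, ∫⁻ x, f i x ∂(μ i) := by rw [Fin.prod_univ_succ]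

theorem pi_withDensity {E : Type*} [MeasurableSpace E] {n : ℕ}
    {μ : Fin n → Measure E} [∀ i, SigmaFinite (μ i)] {f : Fin n → E → ℝ≥0}
    (hf : ∀ i, Measurable (f i)) :
    Measure.pi (fun i => (μ i).withDensity fun x => f i x)
      = (Measure.pi μ).withDensity fun x => ∏ i, (f i (x i) : ℝ≥0∞) := by
  refine Measure.pi_eq fun s hs => ?_
  have hind (x : Fin n → E) : (Set.univ.pi s).indicator (fun x => ∏ i, (f i (x i) : ℝ≥0∞)) x
      = ∏ i, (s i).indicator (fun y => (f i y : ℝ≥0∞)) (x i) := by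
    classical
    simp [Set.indicator_apply, Finset.prod_ite_zero]
  rw [withDensity_apply _ (.univ_pi hs), ← lintegral_indicator (.univ_pi hs), lintegral_congr hind,
    lintegral_fin_nat_prod_eq_prod fun i => (hf i).coe_nnreal_ennreal.indicator (hs i)]
  simp_rw [lintegral_indicator (hs _), withDensity_apply _ (hs _)]

lemma withDensity_finsetSum {α ι : Type*} [MeasurableSpace α] {μ : Measure α} (s : Finset ι)
    {f : ι → α → ℝ≥0∞} (hf : ∀ i, Measurable (f i)) :
    μ.withDensity (fun x => ∑ i ∈ s, f i x) = ∑ i ∈ s, μ.withDensity (f i) := by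
  induction s using Finset.cons_induction with
  | empty => simp
  | cons i s hi ih =>
    simp_rw [Finset.sum_cons, ← ih]
    exact withDensity_add_left (hf i) _

lemma exists_measurable_withDensity_eq {α : Type*} [MeasurableSpace α] {μ P : Measure α}
    [SigmaFinite μ] [SigmaFinite P] (hPμ : P ≪ μ) :
    ∃ p : α → ℝ≥0, Measurable p ∧ P = μ.withDensity fun x => p x := by
  refine ⟨fun x => (P.rnDeriv μ x).toNNReal, (Measure.measurable_rnDeriv P μ).ennreal_toNNReal, ?_⟩
  refine (Measure.withDensity_rnDeriv_eq P μ hPμ).symm.trans (withDensity_congr_ae ?_)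
  filter_upwards [Measure.rnDeriv_lt_top P μ] with x hx
  exact (ENNReal.coe_toNNReal hx.ne).symm

section Hellinger

variable {α : Type*} [MeasurableSpace α] {μ : Measure α}

lemma sqHellinger_nonneg (P Q : Measure α) : 0 ≤ sqHellinger P Q :=
  mul_nonneg (by norm_num) (integral_nonneg fun _ => sq_nonneg _)

lemma integrable_sqrt_mul {f g : α → ℝ} (hf : Integrable f μ) (hg : Integrable g μ)
    (hf0 : ∀ x, 0 ≤ f x) (hg0 : ∀ x, 0 ≤ g x) : Integrable (fun x => √(f x * g x)) μ := by
  refine (hf.add hg).mono' (Real.continuous_sqrt.comp_aestronglyMeasurable (hf.1.mul hg.1))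
    (ae_of_all _ fun x => ?_)
  rw [Real.norm_of_nonneg (Real.sqrt_nonneg _), Pi.add_apply]
  exact Real.sqrt_le_iff.2 ⟨add_nonneg (hf0 x) (hg0 x), by nlinarith [hf0 x, hg0 x]⟩

lemma integrable_of_isFiniteMeasure_withDensity {f : α → ℝ≥0} (hf : Measurable f)
    [IsFiniteMeasure (μ.withDensity fun x => f x)] : Integrable (fun x => (f x : ℝ)) μ := by
  simpa [NNReal.smul_def] using
    (integrable_withDensity_iff_integrable_smul (μ := μ) hf (g := fun _ => (1 : ℝ))).1
      (integrable_const 1)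

lemma integral_eq_one_of_isProbabilityMeasure_withDensity {f : α → ℝ≥0} (hf : Measurable f)
    [IsProbabilityMeasure (μ.withDensity fun x => f x)] : ∫ x, (f x : ℝ) ∂μ = 1 := by
  simpa [NNReal.smul_def] using
    (integral_withDensity_eq_integral_smul (μ := μ) hf fun _ => (1 : ℝ)).symm

lemma sqHellinger_withDensity [SigmaFinite μ] {f g : α → ℝ≥0} (hf : Measurable f)
    (hg : Measurable g) :
    sqHellinger (μ.withDensity fun x => f x) (μ.withDensity fun x => g x)
      = 1 / 2 * ∫ x, (√(f x) - √(g x)) ^ 2 ∂μ := by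
  set P := μ.withDensity fun x => (f x : ℝ≥0∞)
  set Q := μ.withDensity fun x => (g x : ℝ≥0∞)
  have hνμ : P + Q ≪ μ :=
    (withDensity_absolutelyContinuous _ _).add_left (withDensity_absolutelyContinuous _ _)
  have hP : ∀ᵐ x ∂μ, P.rnDeriv (P + Q) x * (P + Q).rnDeriv μ x = f x :=
    (Measure.rnDeriv_mul_rnDeriv (.add_right .rfl _)).trans
      (Measure.rnDeriv_withDensity μ hf.coe_nnreal_ennreal)
  have hQ : ∀ᵐ x ∂μ, Q.rnDeriv (P + Q) x * (P + Q).rnDeriv μ x = g x :=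
    (Measure.rnDeriv_mul_rnDeriv (.add_right' .rfl _)).trans
      (Measure.rnDeriv_withDensity μ hg.coe_nnreal_ennreal)
  -- Changing the reference measure from `P + Q` to `μ` multiplies the integrand by
  -- `d(P + Q)/dμ`, which the square roots absorb.
  have hscale (s a b : ℝ) (hs : 0 ≤ s) : s * (√a - √b) ^ 2 = (√(a * s) - √(b * s)) ^ 2 := by
    rw [Real.sqrt_mul' a hs, Real.sqrt_mul' b hs, ← sub_mul, mul_pow, Real.sq_sqrt hs, mul_comm]
  rw [sqHellinger, ← integral_rnDeriv_smul hνμ]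
  congr 1
  refine integral_congr_ae ?_
  filter_upwards [hP, hQ] with x hPx hQx
  rw [smul_eq_mul, hscale _ _ _ ENNReal.toReal_nonneg, ← ENNReal.toReal_mul, ← ENNReal.toReal_mul,
    hPx, hQx, ENNReal.coe_toReal, ENNReal.coe_toReal]

lemma sqHellinger_withDensity_eq_one_sub [SigmaFinite μ] {f g : α → ℝ≥0} (hf : Measurable f)
    (hg : Measurable g) [IsProbabilityMeasure (μ.withDensity fun x => f x)]
    [IsProbabilityMeasure (μ.withDensity fun x => g x)] :
    sqHellinger (μ.withDensity fun x => f x) (μ.withDensity fun x => g x)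
      = 1 - ∫ x, √(f x * g x) ∂μ := by
  have hfi := integrable_of_isFiniteMeasure_withDensity (μ := μ) hf
  have hgi := integrable_of_isFiniteMeasure_withDensity (μ := μ) hg
  have hexpand (x : α) : (√(f x) - √(g x)) ^ 2 = f x + g x - 2 * √(f x * g x) := by
    rw [sub_sq, Real.sq_sqrt (f x).coe_nonneg, Real.sq_sqrt (g x).coe_nonneg,
      Real.sqrt_mul (f x).coe_nonneg]
    ring
  rw [sqHellinger_withDensity hf hg, integral_congr_ae (ae_of_all _ hexpand), integral_sub,
    integral_add hfi hgi, integral_const_mul,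
    integral_eq_one_of_isProbabilityMeasure_withDensity hf,
    integral_eq_one_of_isProbabilityMeasure_withDensity hg]
  · ring
  · exact hfi.add hgi
  · exact (integrable_sqrt_mul hfi hgi (fun x => (f x).coe_nonneg)
      fun x => (g x).coe_nonneg).const_mul 2

lemma sqHellinger_withDensity_le_one [SigmaFinite μ] {f g : α → ℝ≥0} (hf : Measurable f)
    (hg : Measurable g) [IsProbabilityMeasure (μ.withDensity fun x => f x)]
    [IsProbabilityMeasure (μ.withDensity fun x => g x)] :
    sqHellinger (μ.withDensity fun x => f x) (μ.withDensity fun x => g x) ≤ 1 := by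
  rw [sqHellinger_withDensity_eq_one_sub hf hg]
  exact sub_le_self _ (integral_nonneg fun _ => Real.sqrt_nonneg _)

lemma sum_sqrt_mul_mul_integral_le {ι : Type*} [Fintype ι] {c d : ι → ℝ} {f g : ι → α → ℝ}
    (hc : ∀ i, 0 ≤ c i) (hd : ∀ i, 0 ≤ d i) (hf0 : ∀ i x, 0 ≤ f i x) (hg0 : ∀ i x, 0 ≤ g i x)
    (hf : ∀ i, Integrable (f i) μ) (hg : ∀ i, Integrable (g i) μ) :
    ∑ i, √(c i * d i) * ∫ x, √(f i x * g i x) ∂μ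
      ≤ ∫ x, √((∑ i, c i * f i x) * ∑ i, d i * g i x) ∂μ := by
  have hfg i := integrable_sqrt_mul (hf i) (hg i) (hf0 i) (hg0 i)
  have hcs (x : α) : ∑ i, √(c i * d i) * √(f i x * g i x)
      ≤ √((∑ i, c i * f i x) * ∑ i, d i * g i x) := by
    calc ∑ i, √(c i * d i) * √(f i x * g i x) = ∑ i, √(c i * f i x) * √(d i * g i x) := by
          refine Finset.sum_congr rfl fun i _ => ?_
          rw [← Real.sqrt_mul (mul_nonneg (hc i) (hd i)),
            ← Real.sqrt_mul (mul_nonneg (hc i) (hf0 i x))]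
          ring_nf
      _ ≤ √(∑ i, c i * f i x) * √(∑ i, d i * g i x) :=
          Real.sum_sqrt_mul_sqrt_le _ (fun i => mul_nonneg (hc i) (hf0 i x))
            fun i => mul_nonneg (hd i) (hg0 i x)
      _ = _ := (Real.sqrt_mul (Finset.sum_nonneg fun i _ => mul_nonneg (hc i) (hf0 i x)) _).symm
  simp_rw [← integral_const_mul]
  rw [← integral_finsetSum _ fun i _ => (hfg i).const_mul _]
  exact integral_mono (integrable_finsetSum _ fun i _ => (hfg i).const_mul _)
    (integrable_sqrt_mul (integrable_finsetSum _ fun i _ => (hf i).const_mul _)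
      (integrable_finsetSum _ fun i _ => (hg i).const_mul _)
      (fun x => Finset.sum_nonneg fun i _ => mul_nonneg (hc i) (hf0 i x))
      fun x => Finset.sum_nonneg fun i _ => mul_nonneg (hd i) (hg0 i x)) hcs

end Hellinger

lemma integral_sqrt_prod_mul_prod {E : Type*} [MeasurableSpace E] {n : ℕ}
    {μ : Fin n → Measure E} [∀ i, SigmaFinite (μ i)] {f g : Fin n → E → ℝ}
    (hf0 : ∀ i y, 0 ≤ f i y) (hg0 : ∀ i y, 0 ≤ g i y) :
    ∫ x : Fin n → E, √((∏ i, f i (x i)) * ∏ i, g i (x i)) ∂(Measure.pi μ)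
      = ∏ i, ∫ y, √(f i y * g i y) ∂(μ i) := by
  simp_rw [← Finset.prod_mul_distrib,
    Real.sqrt_prod _ fun i _ => mul_nonneg (hf0 i _) (hg0 i _)]
  exact integral_fin_nat_prod_eq_prod fun i y => √(f i y * g i y)

section HiddenMarkov

variable {Y : Type*} [MeasurableSpace Y] {K : ℕ}

lemma hmmMix_eq_sum_pathWeight (n : ℕ) (w : Fin K → ℝ) (Q : Fin K → Fin K → ℝ)
    (F : Fin K → Measure Y) :
    hmmMix K n w Q F = ∑ k, ENNReal.ofReal (pathWeight w Q k) • Measure.pi fun l => F (k l) :=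
  rfl

lemma isProbabilityMeasure_hmmMix (n : ℕ) {w : Fin K → ℝ} {Q : Fin K → Fin K → ℝ}
    (hw0 : ∀ k, 0 ≤ w k) (hw1 : ∑ k, w k = 1) (hQ0 : ∀ k k', 0 ≤ Q k k')
    (hQ1 : ∀ k, ∑ k', Q k k' = 1) {F : Fin K → Measure Y} (hF : ∀ k, IsProbabilityMeasure (F k)) :
    IsProbabilityMeasure (hmmMix K n w Q F) := by
  constructor
  simp only [hmmMix_eq_sum_pathWeight, Measure.coe_finsetSum, Finset.sum_apply,
    Measure.smul_apply, measure_univ, smul_eq_mul, mul_one]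
  rw [← ENNReal.ofReal_sum_of_nonneg fun k _ => pathWeight_nonneg hw0 hQ0 k,
    sum_pathWeight_of_sum_eq_one n w hQ1, hw1, ENNReal.ofReal_one]

noncomputable def hmmDensity {n : ℕ} (w : Fin K → ℝ) (Q : Fin K → Fin K → ℝ)
    (p : Fin K → Y → ℝ≥0) (x : Fin (n + 1) → Y) : ℝ≥0 :=
  ∑ k : Fin (n + 1) → Fin K, (pathWeight w Q k).toNNReal * ∏ l, p (k l) (x l)

lemma measurable_hmmDensity (n : ℕ) (w : Fin K → ℝ) (Q : Fin K → Fin K → ℝ)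
    {p : Fin K → Y → ℝ≥0} (hp : ∀ k, Measurable (p k)) :
    Measurable fun x : Fin (n + 1) → Y => hmmDensity w Q p x := by
  unfold hmmDensity
  fun_prop

lemma hmmMix_withDensity {μ : Measure Y} [SigmaFinite μ] (n : ℕ) (w : Fin K → ℝ)
    (Q : Fin K → Fin K → ℝ) {p : Fin K → Y → ℝ≥0} (hp : ∀ k, Measurable (p k)) :
    hmmMix K n w Q (fun k => μ.withDensity fun y => p k y)
      = (Measure.pi fun _ => μ).withDensity fun x => hmmDensity w Q p x := by
  simp only [hmmDensity, ENNReal.ofNNReal_finsetSum, ENNReal.coe_mul, ENNReal.ofNNReal_finsetProd]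
  rw [withDensity_finsetSum _ (by fun_prop), hmmMix_eq_sum_pathWeight]
  refine Finset.sum_congr rfl fun k _ => ?_
  rw [pi_withDensity fun l => hp (k l), ← withDensity_smul _ (by fun_prop)]
  rfl

lemma sum_sqrt_pathWeight_mul_prod_le_integral_sqrt_hmmDensity {μ : Measure Y} [SigmaFinite μ]
    (n : ℕ) {w v : Fin K → ℝ} {Q R : Fin K → Fin K → ℝ} (hw0 : ∀ k, 0 ≤ w k)
    (hv0 : ∀ k, 0 ≤ v k) (hQ0 : ∀ k k', 0 ≤ Q k k') (hR0 : ∀ k k', 0 ≤ R k k')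
    {p q : Fin K → Y → ℝ≥0} (hp : ∀ k, Integrable (fun y => (p k y : ℝ)) μ)
    (hq : ∀ k, Integrable (fun y => (q k y : ℝ)) μ) :
    ∑ k : Fin (n + 1) → Fin K, √(pathWeight w Q k * pathWeight v R k)
        * ∏ l, ∫ y, √(p (k l) y * q (k l) y) ∂μ
      ≤ ∫ x : Fin (n + 1) → Y, √(hmmDensity w Q p x * hmmDensity v R q x)
          ∂(Measure.pi fun _ => μ) := by
  simp only [hmmDensity, NNReal.coe_sum, NNReal.coe_mul, NNReal.coe_prod,
    Real.coe_toNNReal _ (pathWeight_nonneg hw0 hQ0 _),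
    Real.coe_toNNReal _ (pathWeight_nonneg hv0 hR0 _),
    ← integral_sqrt_prod_mul_prod (fun _ _ => NNReal.coe_nonneg _) (fun _ _ => NNReal.coe_nonneg _)]
  exact sum_sqrt_mul_mul_integral_le (pathWeight_nonneg hw0 hQ0) (pathWeight_nonneg hv0 hR0)
    (fun _ _ => Finset.prod_nonneg fun _ _ => NNReal.coe_nonneg _)
    (fun _ _ => Finset.prod_nonneg fun _ _ => NNReal.coe_nonneg _)
    (fun k => Integrable.fin_nat_prod fun l => hp (k l))
    (fun k => Integrable.fin_nat_prod fun l => hq (k l))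

lemma mul_pow_mul_pow_le_integral_sqrt_hmmDensity {μ : Measure Y} [SigmaFinite μ] (n : ℕ)
    {w v : Fin K → ℝ} {Q R : Fin K → Fin K → ℝ} (hw0 : ∀ k, 0 ≤ w k) (hv0 : ∀ k, 0 ≤ v k)
    (hQ0 : ∀ k k', 0 ≤ Q k k') (hR0 : ∀ k k', 0 ≤ R k k') {p q : Fin K → Y → ℝ≥0}
    (hp : ∀ k, Integrable (fun y => (p k y : ℝ)) μ) (hq : ∀ k, Integrable (fun y => (q k y : ℝ)) μ)
    {a b : ℝ} (ha : 0 ≤ a) (hb : 0 ≤ b) (hrow : ∀ k, a ≤ ∑ k', √(Q k k' * R k k'))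
    (hemit : ∀ k, b ≤ ∫ y, √(p k y * q k y) ∂μ) :
    (∑ k, √(w k * v k)) * a ^ n * b ^ (n + 1)
      ≤ ∫ x : Fin (n + 1) → Y, √(hmmDensity w Q p x * hmmDensity v R q x)
          ∂(Measure.pi fun _ => μ) := by
  refine le_trans ?_ (sum_sqrt_pathWeight_mul_prod_le_integral_sqrt_hmmDensity n hw0 hv0 hQ0 hR0
    hp hq)
  simp_rw [sqrt_pathWeight_mul_pathWeight hw0 hv0 hQ0 hR0]
  have hprod (k : Fin (n + 1) → Fin K) : b ^ (n + 1) ≤ ∏ l, ∫ y, √(p (k l) y * q (k l) y) ∂μ := by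
    rw [← Fin.prod_const]
    exact Finset.prod_le_prod (fun _ _ => hb) fun l _ => hemit (k l)
  calc (∑ k, √(w k * v k)) * a ^ n * b ^ (n + 1)
      ≤ (∑ k : Fin (n + 1) → Fin K, pathWeight (fun i => √(w i * v i))
          (fun i j => √(Q i j * R i j)) k) * b ^ (n + 1) := by
        gcongr ?_ * _
        exact sum_mul_pow_le_sum_pathWeight n (fun _ => Real.sqrt_nonneg _)
          (fun _ _ => Real.sqrt_nonneg _) ha hrow
    _ ≤ _ := by
        rw [Finset.sum_mul]
        gcongr with k
        exacts [pathWeight_nonneg (fun _ => Real.sqrt_nonneg _) (fun _ _ => Real.sqrt_nonneg _) k,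
          hprod k]

theorem sqHellinger_hmmMix_withDensity_le {μ : Measure Y} [SigmaFinite μ] (n : ℕ)
    {w v : Fin K → ℝ} {Q R : Fin K → Fin K → ℝ}
    (hw0 : ∀ k, 0 ≤ w k) (hv0 : ∀ k, 0 ≤ v k) (hw1 : ∑ k, w k = 1) (hv1 : ∑ k, v k = 1)
    (hQ0 : ∀ k k', 0 ≤ Q k k') (hR0 : ∀ k k', 0 ≤ R k k')
    (hQ1 : ∀ k, ∑ k', Q k k' = 1) (hR1 : ∀ k, ∑ k', R k k' = 1)
    {p q : Fin K → Y → ℝ≥0} (hp : ∀ k, Measurable (p k)) (hq : ∀ k, Measurable (q k))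
    (hP : ∀ k, IsProbabilityMeasure (μ.withDensity fun y => p k y))
    (hQ : ∀ k, IsProbabilityMeasure (μ.withDensity fun y => q k y)) :
    sqHellinger (hmmMix K n w Q fun k => μ.withDensity fun y => p k y)
        (hmmMix K n v R fun k => μ.withDensity fun y => q k y) ≤
      sqHellingerVec w v + n * (⨆ k : Fin K, sqHellingerVec (Q k) (R k))
        + (n + 1) * (⨆ k : Fin K, sqHellinger (μ.withDensity fun y => p k y)
          (μ.withDensity fun y => q k y)) := by
  set εQ := ⨆ k : Fin K, sqHellingerVec (Q k) (R k)
  set εF := ⨆ k : Fin K, sqHellinger (μ.withDensity fun y => p k y)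
    (μ.withDensity fun y => q k y)
  have hrow (k : Fin K) : 1 - εQ ≤ ∑ k', √(Q k k' * R k k') := by
    linarith [sqHellingerVec_eq_one_sub (hQ0 k) (hR0 k) (hQ1 k) (hR1 k),
      le_ciSup (Set.finite_range fun k => sqHellingerVec (Q k) (R k)).bddAbove k]
  have hemit (k : Fin K) : 1 - εF ≤ ∫ y, √(p k y * q k y) ∂μ := by
    linarith [sqHellinger_withDensity_eq_one_sub (μ := μ) (hp k) (hq k),
      le_ciSup (Set.finite_range fun k => sqHellinger (μ.withDensity fun y => p k y)
        (μ.withDensity fun y => q k y)).bddAbove k]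
  have hεQ : εQ ≤ 1 :=
    Real.iSup_le (fun k => sqHellingerVec_le_one (hQ0 k) (hR0 k) (hQ1 k) (hR1 k)) zero_le_one
  have hεF : εF ≤ 1 :=
    Real.iSup_le (fun k => sqHellinger_withDensity_le_one (hp k) (hq k)) zero_le_one
  have haff := mul_pow_mul_pow_le_integral_sqrt_hmmDensity n hw0 hv0 hQ0 hR0
    (fun k => integrable_of_isFiniteMeasure_withDensity (hp k))
    (fun k => integrable_of_isFiniteMeasure_withDensity (hq k)) (sub_nonneg.2 hεQ)
    (sub_nonneg.2 hεF) hrow hemit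
  have hbound := one_sub_mul_pow_mul_pow_le (sqHellingerVec_nonneg w v)
    (Real.iSup_nonneg fun _ => sqHellingerVec_nonneg _ _) hεQ
    (Real.iSup_nonneg fun _ => sqHellinger_nonneg _ _) hεF n (n + 1)
  have hwv := sqHellingerVec_eq_one_sub hw0 hv0 hw1 hv1
  rw [hwv, sub_sub_cancel] at hbound
  have hPmix := isProbabilityMeasure_hmmMix n hw0 hw1 hQ0 hQ1 hP
  have hQmix := isProbabilityMeasure_hmmMix n hv0 hv1 hR0 hR1 hQ
  rw [hmmMix_withDensity n w Q hp] at hPmix ⊢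
  rw [hmmMix_withDensity n v R hq] at hQmix ⊢
  rw [sqHellinger_withDensity_eq_one_sub (measurable_hmmDensity n w Q hp)
    (measurable_hmmDensity n v R hq)]
  push_cast at hbound
  linarith

end HiddenMarkov

theorem sqHellinger_hmmMix_le_general
    {Y : Type*} [MeasurableSpace Y] (K n : ℕ)
    (w v : Fin K → ℝ) (Q R : Fin K → Fin K → ℝ)
    (hw0 : ∀ k, 0 ≤ w k) (hv0 : ∀ k, 0 ≤ v k)
    (hw1 : ∑ k, w k = 1) (hv1 : ∑ k, v k = 1)
    (hQ0 : ∀ k k', 0 ≤ Q k k') (hR0 : ∀ k k', 0 ≤ R k k')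
    (hQ1 : ∀ k, ∑ k', Q k k' = 1) (hR1 : ∀ k, ∑ k', R k k' = 1)
    (F G : Fin K → Measure Y)
    (hF : ∀ k, IsProbabilityMeasure (F k)) (hG : ∀ k, IsProbabilityMeasure (G k)) :
    sqHellinger (hmmMix K n w Q F) (hmmMix K n v R G) ≤
      sqHellingerVec w v + n * (⨆ k : Fin K, sqHellingerVec (Q k) (R k))
        + (n + 1) * (⨆ k : Fin K, sqHellinger (F k) (G k)) := by
  have hle (k : Fin K) : F k + G k ≤ ∑ i, (F i + G i) :=
    Finset.single_le_sum (f := fun i => F i + G i) (fun _ _ => Measure.zero_le _)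
      (Finset.mem_univ k)
  obtain ⟨μ, _, hFμ, hGμ⟩ : ∃ μ : Measure Y, IsFiniteMeasure μ ∧ (∀ k, F k ≪ μ) ∧ ∀ k, G k ≪ μ :=
    ⟨_, inferInstance,
      fun k => Measure.absolutelyContinuous_of_le ((Measure.le_add_right le_rfl).trans (hle k)),
      fun k => Measure.absolutelyContinuous_of_le ((Measure.le_add_left le_rfl).trans (hle k))⟩
  choose p hp hFp using fun k => exists_measurable_withDensity_eq (hFμ k)
  choose q hq hGq using fun k => exists_measurable_withDensity_eq (hGμ k)
  obtain rfl : F = fun k => μ.withDensity fun y => p k y := funext hFp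
  obtain rfl : G = fun k => μ.withDensity fun y => q k y := funext hGq
  exact sqHellinger_hmmMix_withDensity_le n hw0 hv0 hw1 hv1 hQ0 hR0 hQ1 hR1 hp hq hF hG

/-- with `L = n + 1 ≥ 2` and `K ≥ 2`,
`h²(P_{w,Q,F}, P_{v,R,G}) ≤ h²(w,v) + (L-1) maxₖ h²(Q_k, R_k) + L maxₖ h²(F_k, G_k)`. -/
theorem sqHellinger_hmmMix_le
    {Y : Type*} [MeasurableSpace Y] (K n : ℕ) (hK : 2 ≤ K) (hn : 1 ≤ n)
    (w v : Fin K → ℝ) (Q R : Fin K → Fin K → ℝ)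
    (hw0 : ∀ k, 0 ≤ w k) (hv0 : ∀ k, 0 ≤ v k)
    (hw1 : ∑ k, w k = 1) (hv1 : ∑ k, v k = 1)
    (hQ0 : ∀ k k', 0 ≤ Q k k') (hR0 : ∀ k k', 0 ≤ R k k')
    (hQ1 : ∀ k, ∑ k', Q k k' = 1) (hR1 : ∀ k, ∑ k', R k k' = 1)
    (F G : Fin K → Measure Y)
    (hF : ∀ k, IsProbabilityMeasure (F k)) (hG : ∀ k, IsProbabilityMeasure (G k)) :
    sqHellinger (hmmMix K n w Q F) (hmmMix K n v R G) ≤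
      sqHellingerVec w v + n * (⨆ k : Fin K, sqHellingerVec (Q k) (R k))
        + (n + 1) * (⨆ k : Fin K, sqHellinger (F k) (G k)) :=
  sqHellinger_hmmMix_le_general K n w v Q R hw0 hv0 hw1 hv1 hQ0 hR0 hQ1 hR1 F G hF hG
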